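/- arXiv:0907.4553 — 9 statements merged into one kernel-verified Lean document; each statement's English description precedes it below -/
import Mathlib

section
/- Given a unit object (I, α) in a semi-monoidal category (i.e. α : I ⊗ I ≅ I is an isomorphism and the functors X ↦ I ⊗ X, X ↦ X ⊗ I are fully faithful), for each object X there is a unique morphism λ_X : I ⊗ X → X such that I ⊗ λ_X = α ⊗ X (modulo associativity), and this λ_X is an isomorphism. -/
open CategoryTheory

universe v u

/-- A semi-monoidal category: a category with an associative tensor product (strictly
associative on objects, with the corresponding compatibility on morphisms), no unit assumed. -/
structure SemiMonoidalCategory (C : Type u) [Category.{v} C] where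
  ten : C → C → C
  tHom : ∀ {X Y Z W : C}, (X ⟶ Y) → (Z ⟶ W) → (ten X Z ⟶ ten Y W)
  tHom_id : ∀ (X Z : C), tHom (𝟙 X) (𝟙 Z) = 𝟙 (ten X Z)
  tHom_comp : ∀ {X₁ X₂ X₃ Y₁ Y₂ Y₃ : C} (f : X₁ ⟶ X₂) (f' : X₂ ⟶ X₃)
    (g : Y₁ ⟶ Y₂) (g' : Y₂ ⟶ Y₃),
    tHom (f ≫ f') (g ≫ g') = tHom f g ≫ tHom f' g'
  assoc : ∀ (X Y Z : C), ten (ten X Y) Z = ten X (ten Y Z)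
  assoc_nat : ∀ {X X' Y Y' Z Z' : C} (f : X ⟶ X') (g : Y ⟶ Y') (h : Z ⟶ Z'),
    tHom (tHom f g) h =
      eqToHom (assoc X Y Z) ≫ tHom f (tHom g h) ≫ eqToHom (assoc X' Y' Z').symm

namespace SemiMonoidalCategory

variable {C : Type u} [Category.{v} C] (M : SemiMonoidalCategory C)

/-- An object is cancellable if tensoring with it on either side is a fully faithful
endofunctor, i.e. bijective on hom-sets. -/
def CancellableObj (I : C) : Prop :=
  (∀ X Y : C, Function.Bijective fun f : X ⟶ Y => M.tHom (𝟙 I) f) ∧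
  (∀ X Y : C, Function.Bijective fun f : X ⟶ Y => M.tHom f (𝟙 I))

/-- A unit object is a cancellable pseudo-idempotent: `α : I ⊗ I ≅ I` an isomorphism with `I`
cancellable. -/
def IsUnitObj (I : C) (α : M.ten I I ⟶ I) : Prop :=
  M.CancellableObj I ∧ IsIso α

/-- Tensoring with `I` on the left, as an endofunctor. -/
def lTensor (I : C) : C ⥤ C where
  obj X := M.ten I X
  map f := M.tHom (𝟙 I) f
  map_id X := M.tHom_id I X
  map_comp {X Y Z} f g := by
    have := M.tHom_comp (𝟙 I) (𝟙 I) f g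
    simpa using this

/-- Tensoring with `I` on the right, as an endofunctor. -/
def rTensor (I : C) : C ⥤ C where
  obj X := M.ten X I
  map f := M.tHom f (𝟙 I)
  map_id X := M.tHom_id X I
  map_comp {X Y Z} f g := by
    have := M.tHom_comp f g (𝟙 I) (𝟙 I)
    simpa using this

end SemiMonoidalCategory

open CategoryTheory SemiMonoidalCategory

/-- Given a unit object `(I, α)` in a semi-monoidal category, for each object `X` there is a
unique morphism `λ_X : I ⊗ X ⟶ X` such that `I ⊗ λ_X = α ⊗ X` (modulo associativity), and any
such morphism is an isomorphism. -/
theorem unit_left_constraint_exists_unique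
    {C : Type*} [Category C] (M : SemiMonoidalCategory C)
    {I : C} {α : M.ten I I ⟶ I} (h : M.IsUnitObj I α) (X : C) :
    (∃! l : M.ten I X ⟶ X,
        M.tHom (𝟙 I) l = eqToHom (M.assoc I I X).symm ≫ M.tHom α (𝟙 X)) ∧
    (∀ l : M.ten I X ⟶ X,
        M.tHom (𝟙 I) l = eqToHom (M.assoc I I X).symm ≫ M.tHom α (𝟙 X) → IsIso l) := by
  obtain ⟨⟨hL, hR⟩, hα⟩ := h
  have hcomp : ∀ {A B D : C} (f : A ⟶ B) (g : B ⟶ D),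
      M.tHom (𝟙 I) (f ≫ g) = M.tHom (𝟙 I) f ≫ M.tHom (𝟙 I) g := by
    intro A B D f g
    have := M.tHom_comp (𝟙 I) (𝟙 I) f g
    simpa using this
  constructor
  · exact (hL (M.ten I X) X).existsUnique _
  · intro l hl
    have hiso : IsIso (M.tHom (𝟙 I) l) := by
      rw [hl]
      have : IsIso (M.tHom α (𝟙 X)) := by
        refine ⟨M.tHom (inv α) (𝟙 X), ?_, ?_⟩
        · rw [← M.tHom_comp, IsIso.hom_inv_id, Category.comp_id, M.tHom_id]
        · rw [← M.tHom_comp, IsIso.inv_hom_id, Category.comp_id, M.tHom_id]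
      infer_instance
    obtain ⟨g, hg⟩ := (hL X (M.ten I X)).2 (inv (M.tHom (𝟙 I) l))
    simp only [] at hg
    refine ⟨g, ?_, ?_⟩
    · apply (hL (M.ten I X) (M.ten I X)).1
      show M.tHom (𝟙 I) (l ≫ g) = M.tHom (𝟙 I) (𝟙 _)
      rw [hcomp, hg, IsIso.hom_inv_id, M.tHom_id]
    · apply (hL X X).1
      show M.tHom (𝟙 I) (g ≫ l) = M.tHom (𝟙 I) (𝟙 _)
      rw [hcomp, hg, IsIso.inv_hom_id, M.tHom_id]
end

section
/- Given a unit object (I, α) in a semi-monoidal category, the morphisms λ_X : I ⊗ X → X (characterized by I ⊗ λ_X = α ⊗ X) assemble into a natural transformation from the functor X ↦ I ⊗ X to the identity functor. -/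
open CategoryTheory

universe v u

open CategoryTheory SemiMonoidalCategory

/-- Given a unit object `(I, α)` in a semi-monoidal category, the morphisms `λ_X : I ⊗ X ⟶ X`
characterized by `I ⊗ λ_X = α ⊗ X` assemble into a natural transformation from the functor
`X ↦ I ⊗ X` to the identity functor. -/
theorem unit_left_constraint_natural
    {C : Type*} [Category C] (M : SemiMonoidalCategory C)
    {I : C} {α : M.ten I I ⟶ I} (h : M.IsUnitObj I α)
    (lam : ∀ X : C, M.ten I X ⟶ X)
    (hlam : ∀ X : C, M.tHom (𝟙 I) (lam X) = eqToHom (M.assoc I I X).symm ≫ M.tHom α (𝟙 X)) :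
    ∀ {X Y : C} (f : X ⟶ Y), M.tHom (𝟙 I) f ≫ lam Y = lam X ≫ f := by
  intro X Y f
  have comp : ∀ {A B D : C} (u : A ⟶ B) (v : B ⟶ D),
      M.tHom (𝟙 I) (u ≫ v) = M.tHom (𝟙 I) u ≫ M.tHom (𝟙 I) v := by
    intro A B D u v
    simpa using M.tHom_comp (𝟙 I) (𝟙 I) u v
  apply (h.1.1 (M.ten I X) Y).1
  simp only [comp, hlam]
  have h1 : M.tHom (𝟙 I) (M.tHom (𝟙 I) f)
      = eqToHom (M.assoc I I X).symm ≫ M.tHom (𝟙 (M.ten I I)) f ≫ eqToHom (M.assoc I I Y) := by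
    have := M.assoc_nat (𝟙 I) (𝟙 I) f
    rw [M.tHom_id] at this
    rw [this]
    simp
  have h2 : M.tHom (𝟙 (M.ten I I)) f ≫ M.tHom α (𝟙 Y) = M.tHom α (𝟙 X) ≫ M.tHom (𝟙 I) f := by
    rw [← M.tHom_comp, ← M.tHom_comp]
    simp
  rw [h1]
  simp [h2]
end

section
/- Given a unit object (I, α) in a semi-monoidal category, with λ_X : I ⊗ X → X the unique morphism satisfying I ⊗ λ_X = α ⊗ X and ρ_X : X ⊗ I → X the unique morphism satisfying ρ_X ⊗ I = X ⊗ α, the Kelly axiom holds: X ⊗ λ_Y = ρ_X ⊗ Y for all objects X, Y. -/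
open CategoryTheory

universe v u

open CategoryTheory SemiMonoidalCategory

namespace SemiMonoidalCategory

variable {C : Type u} [Category.{v} C] (M : SemiMonoidalCategory C)

lemma tHom_eqToHom_id {X X' Y : C} (h : X = X') :
    M.tHom (eqToHom h) (𝟙 Y) = eqToHom (by rw [h]) := by
  subst h; simp [M.tHom_id]

lemma tHom_id_eqToHom {X Y Y' : C} (h : Y = Y') :
    M.tHom (𝟙 X) (eqToHom h) = eqToHom (by rw [h]) := by
  subst h; simp [M.tHom_id]

lemma tHom_id_comp {X Y₁ Y₂ Y₃ : C} (g : Y₁ ⟶ Y₂) (g' : Y₂ ⟶ Y₃) :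
    M.tHom (𝟙 X) (g ≫ g') = M.tHom (𝟙 X) g ≫ M.tHom (𝟙 X) g' := by
  rw [← M.tHom_comp]; simp

lemma tHom_comp_id {X₁ X₂ X₃ Y : C} (f : X₁ ⟶ X₂) (f' : X₂ ⟶ X₃) :
    M.tHom (f ≫ f') (𝟙 Y) = M.tHom f (𝟙 Y) ≫ M.tHom f' (𝟙 Y) := by
  rw [← M.tHom_comp]; simp

end SemiMonoidalCategory


/-- Given a unit object `(I, α)` in a semi-monoidal category, with `λ_X` characterized by
`I ⊗ λ_X = α ⊗ X` and `ρ_X` characterized by `ρ_X ⊗ I = X ⊗ α`, the Kelly axiom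
`X ⊗ λ_Y = ρ_X ⊗ Y` holds for all objects `X, Y`. -/
theorem unit_kelly_axiom
    {C : Type*} [Category C] (M : SemiMonoidalCategory C)
    {I : C} {α : M.ten I I ⟶ I} (h : M.IsUnitObj I α)
    (lam : ∀ X : C, M.ten I X ⟶ X)
    (hlam : ∀ X : C, M.tHom (𝟙 I) (lam X) = eqToHom (M.assoc I I X).symm ≫ M.tHom α (𝟙 X))
    (rho : ∀ X : C, M.ten X I ⟶ X)
    (hrho : ∀ X : C, M.tHom (rho X) (𝟙 I) = eqToHom (M.assoc X I I) ≫ M.tHom (𝟙 X) α) :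
    ∀ X Y : C, M.tHom (𝟙 X) (lam Y) = eqToHom (M.assoc X I Y).symm ≫ M.tHom (rho X) (𝟙 Y) := by
  intro X Y
  have hα : IsIso α := h.2
  -- the middle iso
  set m : M.ten X (M.ten (M.ten I I) Y) ⟶ M.ten X (M.ten I Y) :=
    M.tHom (𝟙 X) (M.tHom α (𝟙 Y)) with hm
  have him : IsIso m := by
    refine ⟨M.tHom (𝟙 X) (M.tHom (inv α) (𝟙 Y)), ?_, ?_⟩ <;>
      · rw [hm, ← M.tHom_comp, ← M.tHom_comp]; simp [M.tHom_id]
  -- first factorization of K := tHom (rho X) (lam Y)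
  have hA : M.tHom (rho X) (lam Y) =
      eqToHom (by rw [M.assoc, M.assoc]) ≫ m ≫ M.tHom (𝟙 X) (lam Y) := by
    have e1 : M.tHom (rho X) (lam Y)
        = M.tHom (rho X) (𝟙 (M.ten I Y)) ≫ M.tHom (𝟙 X) (lam Y) := by
      rw [← M.tHom_comp]; simp
    have e2 : M.tHom (rho X) (𝟙 (M.ten I Y))
        = eqToHom (M.assoc (M.ten X I) I Y).symm ≫
            M.tHom (M.tHom (rho X) (𝟙 I)) (𝟙 Y) ≫ eqToHom (M.assoc X I Y) := by
      rw [M.assoc_nat (rho X) (𝟙 I) (𝟙 Y)]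
      simp [M.tHom_id]
    rw [e1, e2, hrho, M.tHom_comp_id, M.tHom_eqToHom_id,
      M.assoc_nat (𝟙 X) α (𝟙 Y)]
    simp [hm]
  -- second factorization
  have hB : M.tHom (rho X) (lam Y) =
      eqToHom (by rw [M.assoc, M.assoc]) ≫ m ≫
        eqToHom (M.assoc X I Y).symm ≫ M.tHom (rho X) (𝟙 Y) := by
    have e1 : M.tHom (rho X) (lam Y)
        = M.tHom (𝟙 (M.ten X I)) (lam Y) ≫ M.tHom (rho X) (𝟙 Y) := by
      rw [← M.tHom_comp]; simp
    have e2 : M.tHom (𝟙 (M.ten X I)) (lam Y)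
        = eqToHom (M.assoc X I (M.ten I Y)) ≫
            M.tHom (𝟙 X) (M.tHom (𝟙 I) (lam Y)) ≫ eqToHom (M.assoc X I Y).symm := by
      rw [← M.tHom_id X I, M.assoc_nat (𝟙 X) (𝟙 I) (lam Y)]
    rw [e1, e2, hlam, M.tHom_id_comp, M.tHom_id_eqToHom]
    simp [hm]
  rw [hA] at hB
  have := (cancel_epi (eqToHom (show M.ten (M.ten X I) (M.ten I Y) =
    M.ten X (M.ten (M.ten I I) Y) by rw [M.assoc, M.assoc]))).mp hB
  exact (cancel_epi m).mp this
end

section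
/- Given a unit object (I, α) in a semi-monoidal category, the multiplication α : I ⊗ I → I is associative: α ∘ (α ⊗ I) = α ∘ (I ⊗ α) (modulo associator). -/
open CategoryTheory

universe v u

open CategoryTheory SemiMonoidalCategory

namespace SemiMonoidalCategory

variable {C : Type u} [Category.{v} C] (M : SemiMonoidalCategory C)

lemma aux_tHom_eqToHom_right {X Y Y' : C} (p : Y = Y') :
    M.tHom (𝟙 X) (eqToHom p) = eqToHom (congrArg (M.ten X) p) := by
  subst p; simp [M.tHom_id]

lemma aux_tHom_eqToHom_left {X X' Y : C} (p : X = X') :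
    M.tHom (eqToHom p) (𝟙 Y) = eqToHom (congrArg (fun Z => M.ten Z Y) p) := by
  subst p; simp [M.tHom_id]

lemma aux_tHom_id_comp {X Y Z W : C} (f : Y ⟶ Z) (g : Z ⟶ W) :
    M.tHom (𝟙 X) (f ≫ g) = M.tHom (𝟙 X) f ≫ M.tHom (𝟙 X) g := by
  rw [← M.tHom_comp]; simp

lemma aux_tHom_comp_id {X Y Z W : C} (f : Y ⟶ Z) (g : Z ⟶ W) :
    M.tHom (f ≫ g) (𝟙 X) = M.tHom f (𝟙 X) ≫ M.tHom g (𝟙 X) := by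
  rw [← M.tHom_comp]; simp

lemma aux_exch {X X' Y Y' : C} (f : X ⟶ X') (g : Y ⟶ Y') :
    M.tHom f (𝟙 Y) ≫ M.tHom (𝟙 X') g = M.tHom (𝟙 X) g ≫ M.tHom f (𝟙 Y') := by
  rw [← M.tHom_comp, ← M.tHom_comp]; simp

/-- Key lemma (Kock): for a unit `(I, α)`, `α ⊗ 1 = 1 ⊗ α` modulo the associator. -/
lemma aux_unit_key {I : C} {α : M.ten I I ⟶ I} (h : M.IsUnitObj I α) :
    M.tHom α (𝟙 I) = eqToHom (M.assoc I I I) ≫ M.tHom (𝟙 I) α := by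
  obtain ⟨⟨hL, hR⟩, hiso⟩ := h
  -- the left constraint `λ_I`
  obtain ⟨l, hl₀⟩ := (hL (M.ten I I) I).2
      (eqToHom (M.assoc I I I).symm ≫ M.tHom α (𝟙 I))
  have hl : M.tHom (𝟙 I) l = eqToHom (M.assoc I I I).symm ≫ M.tHom α (𝟙 I) := hl₀
  -- the left constraint `λ_{I⊗I}`
  obtain ⟨lam2, hlam2₀⟩ := (hL (M.ten I (M.ten I I)) (M.ten I I)).2
      (eqToHom (M.assoc I I (M.ten I I)).symm ≫ M.tHom α (𝟙 (M.ten I I)))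
  have hlam2 : M.tHom (𝟙 I) lam2
      = eqToHom (M.assoc I I (M.ten I I)).symm ≫ M.tHom α (𝟙 (M.ten I I)) := hlam2₀
  -- an inverse for `l`
  obtain ⟨g, hg₀⟩ := (hL I (M.ten I I)).2
      (M.tHom (inv α) (𝟙 I) ≫ eqToHom (M.assoc I I I))
  have hg : M.tHom (𝟙 I) g = M.tHom (inv α) (𝟙 I) ≫ eqToHom (M.assoc I I I) := hg₀
  have hlg : l ≫ g = 𝟙 (M.ten I I) := by
    apply (hL (M.ten I I) (M.ten I I)).1
    show M.tHom (𝟙 I) (l ≫ g) = M.tHom (𝟙 I) (𝟙 (M.ten I I))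
    rw [aux_tHom_id_comp, hl, hg, M.tHom_id]
    slice_lhs 2 3 => rw [← M.aux_tHom_comp_id, IsIso.hom_inv_id]
    simp [M.tHom_id]
  -- `1 ⊗ (1 ⊗ l)` expressed via `1_{I⊗I} ⊗ l`
  have h2 : M.tHom (𝟙 I) (M.tHom (𝟙 I) l)
      = eqToHom (M.assoc I I (M.ten I I)).symm ≫ M.tHom (𝟙 (M.ten I I)) l
          ≫ eqToHom (M.assoc I I I) := by
    have hh := M.assoc_nat (𝟙 I) (𝟙 I) l
    rw [M.tHom_id] at hh
    rw [hh]; simp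
  -- naturality of the left constraint at `l`
  have hnat : lam2 ≫ l = M.tHom (𝟙 I) l ≫ l := by
    apply (hL (M.ten I (M.ten I I)) I).1
    show M.tHom (𝟙 I) (lam2 ≫ l) = M.tHom (𝟙 I) (M.tHom (𝟙 I) l ≫ l)
    rw [aux_tHom_id_comp, aux_tHom_id_comp, hlam2, h2]
    simp only [Category.assoc]
    rw [M.aux_exch α l, hl]
    simp
  -- hence `lam2 = 1 ⊗ l`
  have hlam2' : lam2 = M.tHom (𝟙 I) l := by
    calc lam2 = (lam2 ≫ l) ≫ g := by rw [Category.assoc, hlg, Category.comp_id]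
    _ = M.tHom (𝟙 I) l ≫ (l ≫ g) := by rw [hnat, Category.assoc]
    _ = M.tHom (𝟙 I) l := by rw [hlg, Category.comp_id]
  -- the product formula: `lam2 = l ⊗ 1` modulo the associator
  have hprod : lam2 = eqToHom (M.assoc I I I).symm ≫ M.tHom l (𝟙 I) := by
    apply (hL (M.ten I (M.ten I I)) (M.ten I I)).1
    show M.tHom (𝟙 I) lam2
        = M.tHom (𝟙 I) (eqToHom (M.assoc I I I).symm ≫ M.tHom l (𝟙 I))
    rw [hlam2, aux_tHom_id_comp, aux_tHom_eqToHom_right]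
    have hh : M.tHom (𝟙 I) (M.tHom l (𝟙 I))
        = eqToHom (M.assoc I (M.ten I I) I).symm ≫ M.tHom (M.tHom (𝟙 I) l) (𝟙 I)
            ≫ eqToHom (M.assoc I I I) := by
      rw [M.assoc_nat (𝟙 I) l (𝟙 I)]; simp
    rw [hh, hl, aux_tHom_comp_id, aux_tHom_eqToHom_left]
    have hh2 : M.tHom (M.tHom α (𝟙 I)) (𝟙 I)
        = eqToHom (M.assoc (M.ten I I) I I) ≫ M.tHom α (𝟙 (M.ten I I))
            ≫ eqToHom (M.assoc I I I).symm := by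
      have := M.assoc_nat α (𝟙 I) (𝟙 I)
      rwa [M.tHom_id] at this
    rw [hh2]
    simp
  -- conclude `l ⊗ 1 = α ⊗ 1`, hence `l = α`
  have hla : l = α := by
    apply (hR (M.ten I I) I).1
    show M.tHom l (𝟙 I) = M.tHom α (𝟙 I)
    have : eqToHom (M.assoc I I I).symm ≫ M.tHom l (𝟙 I)
        = eqToHom (M.assoc I I I).symm ≫ M.tHom α (𝟙 I) := by
      rw [← hprod, hlam2', hl]
    simpa using congrArg (fun t => eqToHom (M.assoc I I I) ≫ t) this
  have final := hl
  rw [hla] at final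
  rw [final]
  simp

end SemiMonoidalCategory

/-- Given a unit object `(I, α)` in a semi-monoidal category, the multiplication
`α : I ⊗ I ⟶ I` is associative: `α ∘ (α ⊗ I) = α ∘ (I ⊗ α)` (modulo associator). -/
theorem unit_mult_associative
    {C : Type*} [Category C] (M : SemiMonoidalCategory C)
    {I : C} {α : M.ten I I ⟶ I} (h : M.IsUnitObj I α) :
    M.tHom α (𝟙 I) ≫ α = eqToHom (M.assoc I I I) ≫ M.tHom (𝟙 I) α ≫ α := by
  rw [M.aux_unit_key h, Category.assoc]
end

section
/- Given a unit object (I, α) in a semi-monoidal category, the endofunctors X ↦ I ⊗ X and X ↦ X ⊗ I are equivalences of categories (not merely fully faithful). -/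
open CategoryTheory

universe v u

/-!
Since `I ⊗ −` is fully faithful, the isomorphism `(α ⊗ X) ∘ assoc⁻¹ : I ⊗ (I ⊗ X) ≅ I ⊗ X`
is `I ⊗ λ_X` for a unique `λ_X : I ⊗ X ≅ X`, and faithfulness transports the naturality of
`α ⊗ −` to `λ`. Thus `I ⊗ −` is isomorphic to the identity functor, hence an equivalence;
symmetrically for `− ⊗ I`.
-/

namespace SemiMonoidalCategory

variable {C : Type u} [Category.{v} C] (M : SemiMonoidalCategory C)

@[simps]
def tHomIso {X Y Z W : C} (e : X ≅ Y) (e' : Z ≅ W) : M.ten X Z ≅ M.ten Y W where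
  hom := M.tHom e.hom e'.hom
  inv := M.tHom e.inv e'.inv
  hom_inv_id := by rw [← M.tHom_comp, e.hom_inv_id, e'.hom_inv_id, M.tHom_id]
  inv_hom_id := by rw [← M.tHom_comp, e.inv_hom_id, e'.inv_hom_id, M.tHom_id]

lemma tHom_id_comp_tHom_id {X Y Z W : C} (f : X ⟶ Y) (g : Z ⟶ W) :
    M.tHom (𝟙 X) g ≫ M.tHom f (𝟙 W) = M.tHom f (𝟙 Z) ≫ M.tHom (𝟙 Y) g := by
  simp only [← M.tHom_comp, Category.id_comp, Category.comp_id]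

lemma tHom_id_tHom_id_comp_eqToHom (A B : C) {X Y : C} (f : X ⟶ Y) :
    M.tHom (𝟙 A) (M.tHom (𝟙 B) f) ≫ eqToHom (M.assoc A B Y).symm =
      eqToHom (M.assoc A B X).symm ≫ M.tHom (𝟙 (M.ten A B)) f := by
  rw [← M.tHom_id, M.assoc_nat]
  simp

lemma tHom_tHom_id_id_comp_eqToHom {X Y : C} (f : X ⟶ Y) (A B : C) :
    M.tHom (M.tHom f (𝟙 A)) (𝟙 B) ≫ eqToHom (M.assoc Y A B) =
      eqToHom (M.assoc X A B) ≫ M.tHom f (𝟙 (M.ten A B)) := by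
  rw [M.assoc_nat, M.tHom_id]
  simp

variable {I : C} (α : M.ten I I ⟶ I) [IsIso α]

section Left

variable (hI : ∀ X Y : C, Function.Bijective fun f : X ⟶ Y => M.tHom (𝟙 I) f)

noncomputable def lTensorFullyFaithful : (M.lTensor I).FullyFaithful :=
  ((Functor.FullyFaithful.nonempty_iff_map_bijective _).2 hI).some

noncomputable def leftUnitorApp (X : C) : (M.lTensor I).obj X ≅ X :=
  (M.lTensorFullyFaithful hI).preimageIso
    (eqToIso (M.assoc I I X).symm ≪≫ M.tHomIso (asIso α) (Iso.refl X))

lemma lTensor_map_leftUnitorApp_hom (X : C) :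
    (M.lTensor I).map (M.leftUnitorApp α hI X).hom =
      eqToHom (M.assoc I I X).symm ≫ M.tHom α (𝟙 X) :=
  (M.lTensorFullyFaithful hI).map_preimage _

noncomputable def leftUnitor : M.lTensor I ≅ 𝟭 C :=
  NatIso.ofComponents (M.leftUnitorApp α hI) fun {X Y} f =>
    (M.lTensorFullyFaithful hI).map_injective <| by
      rw [Functor.map_comp, Functor.map_comp]
      erw [lTensor_map_leftUnitorApp_hom, lTensor_map_leftUnitorApp_hom]
      calc M.tHom (𝟙 I) (M.tHom (𝟙 I) f) ≫ eqToHom (M.assoc I I Y).symm ≫ M.tHom α (𝟙 Y)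
          = eqToHom (M.assoc I I X).symm ≫ M.tHom (𝟙 (M.ten I I)) f ≫ M.tHom α (𝟙 Y) := by
            rw [← Category.assoc, tHom_id_tHom_id_comp_eqToHom, Category.assoc]
        _ = (eqToHom (M.assoc I I X).symm ≫ M.tHom α (𝟙 X)) ≫ M.tHom (𝟙 I) f := by
            rw [tHom_id_comp_tHom_id, Category.assoc]

end Left

section Right

variable (hI : ∀ X Y : C, Function.Bijective fun f : X ⟶ Y => M.tHom f (𝟙 I))

noncomputable def rTensorFullyFaithful : (M.rTensor I).FullyFaithful :=
  ((Functor.FullyFaithful.nonempty_iff_map_bijective _).2 hI).some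

noncomputable def rightUnitorApp (X : C) : (M.rTensor I).obj X ≅ X :=
  (M.rTensorFullyFaithful hI).preimageIso
    (eqToIso (M.assoc X I I) ≪≫ M.tHomIso (Iso.refl X) (asIso α))

lemma rTensor_map_rightUnitorApp_hom (X : C) :
    (M.rTensor I).map (M.rightUnitorApp α hI X).hom =
      eqToHom (M.assoc X I I) ≫ M.tHom (𝟙 X) α :=
  (M.rTensorFullyFaithful hI).map_preimage _

noncomputable def rightUnitor : M.rTensor I ≅ 𝟭 C :=
  NatIso.ofComponents (M.rightUnitorApp α hI) fun {X Y} f =>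
    (M.rTensorFullyFaithful hI).map_injective <| by
      rw [Functor.map_comp, Functor.map_comp]
      erw [rTensor_map_rightUnitorApp_hom, rTensor_map_rightUnitorApp_hom]
      calc M.tHom (M.tHom f (𝟙 I)) (𝟙 I) ≫ eqToHom (M.assoc Y I I) ≫ M.tHom (𝟙 Y) α
          = eqToHom (M.assoc X I I) ≫ M.tHom f (𝟙 (M.ten I I)) ≫ M.tHom (𝟙 Y) α := by
            rw [← Category.assoc, tHom_tHom_id_id_comp_eqToHom, Category.assoc]
        _ = (eqToHom (M.assoc X I I) ≫ M.tHom (𝟙 X) α) ≫ M.tHom f (𝟙 I) := by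
            rw [← tHom_id_comp_tHom_id, Category.assoc]

end Right

end SemiMonoidalCategory

open CategoryTheory SemiMonoidalCategory

/-- Given a unit object `(I, α)` in a semi-monoidal category, the endofunctors `X ↦ I ⊗ X`
and `X ↦ X ⊗ I` are equivalences of categories (not merely fully faithful). -/
theorem unit_tensor_equivalence
    {C : Type*} [Category C] (M : SemiMonoidalCategory C)
    {I : C} {α : M.ten I I ⟶ I} (h : M.IsUnitObj I α) :
    (M.lTensor I).IsEquivalence ∧ (M.rTensor I).IsEquivalence := by
  obtain ⟨⟨hl, hr⟩, hα⟩ := h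
  exact ⟨Functor.isEquivalence_of_iso (M.leftUnitor α hl).symm,
    Functor.isEquivalence_of_iso (M.rightUnitor α hr).symm⟩
end

section
/- In a semi-monoidal category, any two unit objects (I, α) and (J, β) are isomorphic, i.e. there exists an isomorphism I ≅ J. -/
open CategoryTheory

universe v u

open CategoryTheory SemiMonoidalCategory

section Aux

variable {C : Type u} [Category.{v} C] (M : SemiMonoidalCategory C)

lemma tHom_isIso {X Y Z W : C} (f : X ⟶ Y) (g : Z ⟶ W) [IsIso f] [IsIso g] :
    IsIso (M.tHom f g) := by
  refine ⟨M.tHom (inv f) (inv g), ?_, ?_⟩ <;>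
    rw [← M.tHom_comp] <;> simp [M.tHom_id]

lemma reflect_iso_left {I X Y : C}
    (h : ∀ X Y : C, Function.Bijective fun f : X ⟶ Y => M.tHom (𝟙 I) f)
    (f : X ⟶ Y) (hf : IsIso (M.tHom (𝟙 I) f)) : IsIso f := by
  obtain ⟨g, hg⟩ := (h Y X).2 (inv (M.tHom (𝟙 I) f))
  simp only at hg
  refine ⟨g, (h X X).1 ?_, (h Y Y).1 ?_⟩ <;>
    simp only [M.tHom_id] <;> rw [show (𝟙 I : I ⟶ I) = 𝟙 I ≫ 𝟙 I by simp, M.tHom_comp, hg] <;>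
    simp

lemma reflect_iso_right {I X Y : C}
    (h : ∀ X Y : C, Function.Bijective fun f : X ⟶ Y => M.tHom f (𝟙 I))
    (f : X ⟶ Y) (hf : IsIso (M.tHom f (𝟙 I))) : IsIso f := by
  obtain ⟨g, hg⟩ := (h Y X).2 (inv (M.tHom f (𝟙 I)))
  simp only at hg
  refine ⟨g, (h X X).1 ?_, (h Y Y).1 ?_⟩ <;>
    simp only [M.tHom_id] <;> rw [show (𝟙 I : I ⟶ I) = 𝟙 I ≫ 𝟙 I by simp, M.tHom_comp, hg] <;>
    simp

end Aux

/-- In a semi-monoidal category, any two unit objects `(I, α)` and `(J, β)` are isomorphic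
(via the composite `λ_J ∘ ρ_I⁻¹ : I ⟶ I ⊗ J ⟶ J`); in particular there exists an isomorphism
`I ≅ J`. -/
theorem units_isomorphic
    {C : Type*} [Category C] (M : SemiMonoidalCategory C)
    {I : C} {α : M.ten I I ⟶ I} (hI : M.IsUnitObj I α)
    {J : C} {β : M.ten J J ⟶ J} (hJ : M.IsUnitObj J β) :
    Nonempty (I ≅ J) := by
  obtain ⟨⟨hIl, hIr⟩, hα⟩ := hI
  obtain ⟨⟨hJl, hJr⟩, hβ⟩ := hJ
  -- left constraint λ : I ⊗ J ⟶ J for the unit (I, α)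
  obtain ⟨l, hl⟩ := (hIl (M.ten I J) J).2
    (eqToHom (M.assoc I I J).symm ≫ M.tHom α (𝟙 J))
  -- right constraint ρ : I ⊗ J ⟶ I for the unit (J, β)
  obtain ⟨r, hr⟩ := (hJr (M.ten I J) I).2
    (eqToHom (M.assoc I J J) ≫ M.tHom (𝟙 I) β)
  simp only at hl hr
  have hliso : IsIso l := by
    apply reflect_iso_left M hIl
    rw [hl]
    have := tHom_isIso M α (𝟙 J)
    infer_instance
  have hriso : IsIso r := by
    apply reflect_iso_right M hJr
    rw [hr]
    have := tHom_isIso M (𝟙 I) β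
    infer_instance
  exact ⟨(asIso r).symm ≪≫ asIso l⟩
end

section
/- In a strict 2-category with strict tensor product, if (I, α) is a unit object (α : I⊗I → I an equi-arrow, tensoring with I on either side fully faithful 2-functors), then for every object X there exist an equi-arrow λ_X : I⊗X → X and an invertible 2-cell L_X : I ⊗ λ_X ⟹ α ⊗ X. -/
open CategoryTheory

universe w v u

section Two
variable {B : Type u} [Bicategory.{w, v} B] [Bicategory.Strict B]

open Bicategory

/-- A 1-cell admitting a pseudo-inverse. -/
def IsEquiArrow {a b : B} (f : a ⟶ b) : Prop :=
  ∃ g : b ⟶ a, Nonempty (f ≫ g ≅ 𝟙 a) ∧ Nonempty (g ≫ f ≅ 𝟙 b)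

/-- A strict (2-functorial, strictly associative) tensor product on a strict 2-category. -/
structure Tensor2 (B : Type u) [Bicategory.{w, v} B] [Bicategory.Strict B] where
  obj : B → B → B
  hom : ∀ {a b c d : B}, (a ⟶ b) → (c ⟶ d) → (obj a c ⟶ obj b d)
  cell : ∀ {a b c d : B} {f f' : a ⟶ b} {g g' : c ⟶ d},
    (f ⟶ f') → (g ⟶ g') → (hom f g ⟶ hom f' g')
  hom_id : ∀ (a c : B), hom (𝟙 a) (𝟙 c) = 𝟙 (obj a c)
  hom_comp : ∀ {a b c a' b' c' : B} (f : a ⟶ b) (g : b ⟶ c) (f' : a' ⟶ b') (g' : b' ⟶ c'),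
    hom (f ≫ g) (f' ≫ g') = hom f f' ≫ hom g g'
  cell_id : ∀ {a b c d : B} (f : a ⟶ b) (g : c ⟶ d), cell (𝟙 f) (𝟙 g) = 𝟙 (hom f g)
  cell_comp : ∀ {a b c d : B} {f f' f'' : a ⟶ b} {g g' g'' : c ⟶ d}
    (η : f ⟶ f') (η' : f' ⟶ f'') (θ : g ⟶ g') (θ' : g' ⟶ g''),
    cell (η ≫ η') (θ ≫ θ') = cell η θ ≫ cell η' θ'
  cell_whisker : ∀ {a b c a' b' c' : B} {f₁ f₂ : a ⟶ b} {g₁ g₂ : b ⟶ c}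
    {f₁' f₂' : a' ⟶ b'} {g₁' g₂' : b' ⟶ c'}
    (η : f₁ ⟶ f₂) (θ : g₁ ⟶ g₂) (η' : f₁' ⟶ f₂') (θ' : g₁' ⟶ g₂'),
    cell (η ▷ g₁ ≫ f₂ ◁ θ) (η' ▷ g₁' ≫ f₂' ◁ θ') =
      eqToHom (hom_comp f₁ g₁ f₁' g₁') ≫ (cell η η' ▷ hom g₁ g₁') ≫
        (hom f₂ f₂' ◁ cell θ θ') ≫ eqToHom (hom_comp f₂ g₂ f₂' g₂').symm
  assoc : ∀ (a b c : B), obj (obj a b) c = obj a (obj b c)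
  hom_assoc : ∀ {a a' b b' c c' : B} (f : a ⟶ a') (g : b ⟶ b') (k : c ⟶ c'),
    hom (hom f g) k ≫ eqToHom (assoc a' b' c') = eqToHom (assoc a b c) ≫ hom f (hom g k)

variable (T : Tensor2 B)

/-- The 2-functor "tensoring with `I` on the left", as a functor on hom-categories. -/
def lFun (I X Y : B) : (X ⟶ Y) ⥤ (T.obj I X ⟶ T.obj I Y) where
  obj f := T.hom (𝟙 I) f
  map η := T.cell (𝟙 (𝟙 I)) η
  map_id f := T.cell_id _ _
  map_comp {f g h} η θ := by
    have := T.cell_comp (𝟙 (𝟙 I)) (𝟙 (𝟙 I)) η θ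
    simpa using this

/-- The 2-functor "tensoring with `I` on the right", as a functor on hom-categories. -/
def rFun (I X Y : B) : (X ⟶ Y) ⥤ (T.obj X I ⟶ T.obj Y I) where
  obj f := T.hom f (𝟙 I)
  map η := T.cell η (𝟙 (𝟙 I))
  map_id f := T.cell_id _ _
  map_comp {f g h} η θ := by
    have := T.cell_comp η θ (𝟙 (𝟙 I)) (𝟙 (𝟙 I))
    simpa using this

/-- Cancellable object: tensoring with it on either side is fully faithful, i.e. induces
equivalences of hom-categories. -/
def Cancellable2 (I : B) : Prop :=
  (∀ X Y : B, (lFun T I X Y).IsEquivalence) ∧ (∀ X Y : B, (rFun T I X Y).IsEquivalence)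

/-- A unit object: a cancellable pseudo-idempotent. -/
def IsUnit2 (I : B) (α : T.obj I I ⟶ I) : Prop :=
  Cancellable2 T I ∧ IsEquiArrow α

end Two

open CategoryTheory Bicategory

section Aux
variable {B : Type u} [Bicategory.{w, v} B] [Bicategory.Strict B]

lemma equi_of_iso {a b : B} {f g : a ⟶ b} (e : f ≅ g) (hf : IsEquiArrow f) :
    IsEquiArrow g := by
  obtain ⟨f', ⟨e1⟩, ⟨e2⟩⟩ := hf
  exact ⟨f', ⟨(whiskerRightIso e.symm f').trans e1⟩,
    ⟨(whiskerLeftIso f' e.symm).trans e2⟩⟩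

lemma equi_id (a : B) : IsEquiArrow (𝟙 a) :=
  ⟨𝟙 a, ⟨eqToIso (by simp)⟩, ⟨eqToIso (by simp)⟩⟩

lemma equi_comp {a b c : B} {f : a ⟶ b} {g : b ⟶ c}
    (hf : IsEquiArrow f) (hg : IsEquiArrow g) : IsEquiArrow (f ≫ g) := by
  obtain ⟨f', ⟨e1⟩, ⟨e2⟩⟩ := hf
  obtain ⟨g', ⟨d1⟩, ⟨d2⟩⟩ := hg
  refine ⟨g' ≫ f', ⟨?_⟩, ⟨?_⟩⟩
  · calc (f ≫ g) ≫ g' ≫ f' ≅ f ≫ (g ≫ g') ≫ f' := eqToIso (by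
        rw [Bicategory.Strict.assoc, Bicategory.Strict.assoc])
    _ ≅ f ≫ 𝟙 b ≫ f' := whiskerLeftIso f (whiskerRightIso d1 f')
    _ ≅ f ≫ f' := eqToIso (by rw [Bicategory.Strict.id_comp])
    _ ≅ 𝟙 a := e1
  · calc (g' ≫ f') ≫ f ≫ g ≅ g' ≫ (f' ≫ f) ≫ g := eqToIso (by
        rw [Bicategory.Strict.assoc, Bicategory.Strict.assoc])
    _ ≅ g' ≫ 𝟙 b ≫ g := whiskerLeftIso g' (whiskerRightIso e2 g)
    _ ≅ g' ≫ g := eqToIso (by rw [Bicategory.Strict.id_comp])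
    _ ≅ 𝟙 c := d2

lemma equi_eqToHom {a b : B} (p : a = b) : IsEquiArrow (eqToHom p) := by
  subst p; simpa using equi_id a

variable (T : Tensor2 B)

/-- `T.cell` applied to isomorphisms is an isomorphism. -/
def cellIso {a b c d : B} {f f' : a ⟶ b} {g g' : c ⟶ d}
    (η : f ≅ f') (θ : g ≅ g') : T.hom f g ≅ T.hom f' g' where
  hom := T.cell η.hom θ.hom
  inv := T.cell η.inv θ.inv
  hom_inv_id := by rw [← T.cell_comp, η.hom_inv_id, θ.hom_inv_id, T.cell_id]
  inv_hom_id := by rw [← T.cell_comp, η.inv_hom_id, θ.inv_hom_id, T.cell_id]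

lemma equi_hom {a b c d : B} {f : a ⟶ b} {g : c ⟶ d}
    (hf : IsEquiArrow f) (hg : IsEquiArrow g) : IsEquiArrow (T.hom f g) := by
  obtain ⟨f', ⟨e1⟩, ⟨e2⟩⟩ := hf
  obtain ⟨g', ⟨d1⟩, ⟨d2⟩⟩ := hg
  refine ⟨T.hom f' g', ⟨?_⟩, ⟨?_⟩⟩
  · calc T.hom f g ≫ T.hom f' g' ≅ T.hom (f ≫ f') (g ≫ g') :=
        eqToIso (T.hom_comp f f' g g').symm
    _ ≅ T.hom (𝟙 a) (𝟙 c) := cellIso T e1 d1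
    _ ≅ 𝟙 (T.obj a c) := eqToIso (T.hom_id a c)
  · calc T.hom f' g' ≫ T.hom f g ≅ T.hom (f' ≫ f) (g' ≫ g) :=
        eqToIso (T.hom_comp f' f g' g).symm
    _ ≅ T.hom (𝟙 b) (𝟙 d) := cellIso T e2 d2
    _ ≅ 𝟙 (T.obj b d) := eqToIso (T.hom_id b d)

lemma equi_of_lFun {I : B} (hc : ∀ X Y : B, (lFun T I X Y).IsEquivalence)
    {X Y : B} (lam : X ⟶ Y) (hl : IsEquiArrow (T.hom (𝟙 I) lam)) :
    IsEquiArrow lam := by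
  obtain ⟨g, ⟨e1⟩, ⟨e2⟩⟩ := hl
  -- g : T.obj I Y ⟶ T.obj I X
  haveI := hc Y X
  haveI := hc X X
  haveI := hc Y Y
  let F : (Y ⟶ X) ⥤ _ := lFun T I Y X
  let g' : Y ⟶ X := F.objPreimage g
  have eg : T.hom (𝟙 I) g' ≅ g := F.objObjPreimageIso g
  refine ⟨g', ⟨?_⟩, ⟨?_⟩⟩
  · apply (lFun T I X X).preimageIso
    show T.hom (𝟙 I) (lam ≫ g') ≅ T.hom (𝟙 I) (𝟙 X)
    calc T.hom (𝟙 I) (lam ≫ g') ≅ T.hom (𝟙 I ≫ 𝟙 I) (lam ≫ g') :=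
        eqToIso (by rw [Category.comp_id])
      _ ≅ T.hom (𝟙 I) lam ≫ T.hom (𝟙 I) g' := eqToIso (T.hom_comp _ _ _ _)
      _ ≅ T.hom (𝟙 I) lam ≫ g := whiskerLeftIso _ eg
      _ ≅ 𝟙 (T.obj I X) := e1
      _ ≅ T.hom (𝟙 I) (𝟙 X) := eqToIso (T.hom_id I X).symm
  · apply (lFun T I Y Y).preimageIso
    show T.hom (𝟙 I) (g' ≫ lam) ≅ T.hom (𝟙 I) (𝟙 Y)
    calc T.hom (𝟙 I) (g' ≫ lam) ≅ T.hom (𝟙 I ≫ 𝟙 I) (g' ≫ lam) :=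
        eqToIso (by rw [Category.comp_id])
      _ ≅ T.hom (𝟙 I) g' ≫ T.hom (𝟙 I) lam := eqToIso (T.hom_comp _ _ _ _)
      _ ≅ g ≫ T.hom (𝟙 I) lam := whiskerRightIso eg _
      _ ≅ 𝟙 (T.obj I Y) := e2
      _ ≅ T.hom (𝟙 I) (𝟙 Y) := eqToIso (T.hom_id I Y).symm

end Aux

/-- In a strict semi-monoidal 2-category, if `(I, α)` is a unit object then for every object
`X` there exist an equi-arrow `λ_X : I ⊗ X ⟶ X` and an invertible 2-cell
`L_X : I ⊗ λ_X ⟹ α ⊗ X` (modulo the strict associativity of the tensor). -/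
theorem unit2_left_constraints_exist
    {B : Type*} [Bicategory B] [Bicategory.Strict B] (T : Tensor2 B)
    {I : B} {α : T.obj I I ⟶ I} (h : IsUnit2 T I α) (X : B) :
    ∃ (lam : T.obj I X ⟶ X)
      (L : T.hom (𝟙 I) lam ⟶ eqToHom (T.assoc I I X).symm ≫ T.hom α (𝟙 X)),
      IsEquiArrow lam ∧ IsIso L := by
  obtain ⟨⟨hL, _⟩, hα⟩ := h
  haveI := hL (T.obj I X) X
  set t : T.obj I (T.obj I X) ⟶ T.obj I X :=
    eqToHom (T.assoc I I X).symm ≫ T.hom α (𝟙 X) with ht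
  let F := lFun T I (T.obj I X) X
  let lam : T.obj I X ⟶ X := F.objPreimage t
  have e : T.hom (𝟙 I) lam ≅ t := F.objObjPreimageIso t
  refine ⟨lam, e.hom, ?_, inferInstance⟩
  apply equi_of_lFun T hL
  apply equi_of_iso e.symm
  exact equi_comp (equi_eqToHom _) (equi_hom T hα (equi_id X))
end

section
/- Given a unit object (I, α) in a strict semi-monoidal 2-category, with chosen left constraint (λ_I, L_I) and right constraint (ρ_I, R_I) at the object I, there exist unique invertible 2-cells E : ρ_I ⟹ α and D : α ⟹ λ_I comparing the left and right constraints with α at the unit object, characterized by equations (I⊗D)∘L = A and (E⊗I)∘R = A where A is the canonical associator 2-cell of α. -/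
open CategoryTheory

universe w v u

open CategoryTheory Bicategory

section Assoc
variable {B : Type u} [Bicategory.{w, v} B] [Bicategory.Strict B] (T : Tensor2 B)

/-- The 1-cell `I ⊗ α : I⊗(I⊗I) ⟶ I⊗I`. -/
def Ia (I : B) (α : T.obj I I ⟶ I) : T.obj I (T.obj I I) ⟶ T.obj I I :=
  T.hom (𝟙 I) α

/-- The 1-cell `α ⊗ I : I⊗(I⊗I) ⟶ I⊗I` (transported along strict associativity). -/
def aIR (I : B) (α : T.obj I I ⟶ I) : T.obj I (T.obj I I) ⟶ T.obj I I :=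
  eqToHom (T.assoc I I I).symm ≫ T.hom α (𝟙 I)

/-- The 1-cell `I ⊗ α ⊗ I` on the fourfold tensor power. -/
def IaI (I : B) (α : T.obj I I ⟶ I) :
    T.obj I (T.obj (T.obj I I) I) ⟶ T.obj I (T.obj I I) :=
  T.hom (𝟙 I) (T.hom α (𝟙 I))

/-- The defining pasting equation (equation (9) of Joyal–Kock) for the canonical associator
`A : I⊗α ⟹ α⊗I` of a unit `(I, α)`, relative to a chosen left constraint `(λ_I, L)` and right
constraint `(ρ_I, R)` at `I`. All the equalities of 1-cells needed to paste the faces (which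
hold automatically by strict 2-functoriality of the tensor and strictness of the 2-category)
are quantified. -/
def DefinesAssociator (I : B) (α : T.obj I I ⟶ I)
    (lamI : T.obj I I ⟶ I)
    (L : T.hom (𝟙 I) lamI ⟶ aIR T I α) (hL : IsIso L)
    (rhoI : T.obj I I ⟶ I)
    (R : Ia T I α ⟶ eqToHom (T.assoc I I I).symm ≫ T.hom rhoI (𝟙 I)) (hR : IsIso R)
    (A : Ia T I α ⟶ aIR T I α) : Prop :=
  haveI := hL
  haveI := hR
  ∀ (w : T.obj I (T.obj (T.obj I I) I) = T.obj I (T.obj I (T.obj I I)))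
    (m₁ : IaI T I α = eqToHom w ≫ T.hom (𝟙 I) (aIR T I α))
    (w2 : T.obj I (T.obj (T.obj I I) I) = T.obj (T.obj I I) (T.obj I I))
    (sq : (eqToHom w ≫ T.hom (𝟙 I) (T.hom (𝟙 I) lamI)) ≫
            (eqToHom (T.assoc I I I).symm ≫ T.hom rhoI (𝟙 I)) =
          (eqToHom w2 ≫ T.hom rhoI (𝟙 (T.obj I I))) ≫ T.hom (𝟙 I) lamI)
    (w3 : T.obj I (T.obj (T.obj I I) I) = T.obj (T.obj I (T.obj I I)) I)
    (m₃ : (eqToHom w2 ≫ T.hom rhoI (𝟙 (T.obj I I))) ≫ T.hom (𝟙 I) lamI =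
          (eqToHom w3 ≫
              T.hom (eqToHom (T.assoc I I I).symm ≫ T.hom rhoI (𝟙 I)) (𝟙 I)) ≫
            (eqToHom (T.assoc I I I) ≫ T.hom (𝟙 I) lamI))
    (m₄ : (eqToHom w3 ≫ T.hom (T.hom (𝟙 I) α) (𝟙 I)) ≫
            (eqToHom (T.assoc I I I) ≫ T.hom (𝟙 I) lamI) =
          IaI T I α ≫ T.hom (𝟙 I) lamI),
    ((eqToHom m₁ ≫ (eqToHom w ◁ T.cell (𝟙 (𝟙 I)) (inv L))) ▷ Ia T I α) ≫
        ((eqToHom w ≫ T.hom (𝟙 I) (T.hom (𝟙 I) lamI)) ◁ R) ≫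
        eqToHom sq ≫ eqToHom m₃ ≫
        ((eqToHom w3 ◁ T.cell (inv R) (𝟙 (𝟙 I))) ▷
          (eqToHom (T.assoc I I I) ≫ T.hom (𝟙 I) lamI)) ≫
        eqToHom m₄ ≫ (IaI T I α ◁ L)
      = IaI T I α ◁ A

end Assoc

/-! The pasting (9) exhibits `(I ⊗ α ⊗ I) ◁ A` as a composite of invertible 2-cells, and whiskering
by `I ⊗ α ⊗ I` reflects invertibility because `α` has a pseudo-inverse; so `A` is invertible.
As tensoring with `I` on either side is fully faithful, `D` and `E` are the unique preimages of
`A ≫ L⁻¹` and `R⁻¹ ≫ A`, and they are invertible because these are. -/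

namespace CategoryTheory.Functor

variable {C D : Type*} [Category C] [Category D] (F : C ⥤ D) [F.Full] [F.Faithful]

theorem existsUnique_map_comp_eq {x y : C} {Y : D} (l : F.obj y ≅ Y) (a : F.obj x ⟶ Y) :
    ∃! d : x ⟶ y, F.map d ≫ l.hom = a := by
  simpa only [← Iso.eq_comp_inv] using
    Function.Bijective.existsUnique ⟨F.map_injective, F.map_surjective⟩ (a ≫ l.inv)

theorem existsUnique_comp_map_eq {x y : C} {X : D} (r : X ≅ F.obj x) (a : X ⟶ F.obj y) :
    ∃! e : x ⟶ y, r.hom ≫ F.map e = a := by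
  simpa only [← Iso.eq_inv_comp] using
    Function.Bijective.existsUnique ⟨F.map_injective, F.map_surjective⟩ (r.inv ≫ a)

theorem isIso_of_map_comp_eq {x y : C} {Y : D} (l : F.obj y ≅ Y) (a : F.obj x ≅ Y)
    {d : x ⟶ y} (h : F.map d ≫ l.hom = a.hom) : IsIso d := by
  rw [← Iso.eq_comp_inv] at h
  have : IsIso (F.map d) := h ▸ inferInstance
  exact isIso_of_reflects_iso d F

theorem isIso_of_comp_map_eq {x y : C} {X : D} (r : X ≅ F.obj x) (a : X ≅ F.obj y)
    {e : x ⟶ y} (h : r.hom ≫ F.map e = a.hom) : IsIso e := by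
  rw [← Iso.eq_inv_comp] at h
  have : IsIso (F.map e) := h ▸ inferInstance
  exact isIso_of_reflects_iso e F

end CategoryTheory.Functor

namespace CategoryTheory.Bicategory

variable {B : Type*} [Bicategory B] {a b : B}

theorem precomp_isEquivalence_of_iso_id (c : B) {f : a ⟶ a} (e : f ≅ 𝟙 a) :
    (precomp c f).IsEquivalence :=
  Functor.isEquivalence_of_iso ((precomposing a a c).mapIso e ≪≫ leftUnitorNatIso a c).symm

instance precomp_eqToHom_isEquivalence (c : B) (p : a = b) :
    (precomp c (eqToHom p)).IsEquivalence := by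
  subst p
  exact precomp_isEquivalence_of_iso_id c (Iso.refl _)

theorem isIso_of_isIso_whiskerLeft {c : B} {f : a ⟶ b} {g : b ⟶ a} (e : g ≫ f ≅ 𝟙 b) {x y : b ⟶ c}
    (η : x ⟶ y) [IsIso (f ◁ η)] : IsIso η := by
  have := precomp_isEquivalence_of_iso_id c e
  have : IsIso ((g ≫ f) ◁ η) := by
    rw [comp_whiskerLeft]
    infer_instance
  have : IsIso ((precomp c (g ≫ f)).map η) := this
  exact isIso_of_reflects_iso η (precomp c (g ≫ f))

end CategoryTheory.Bicategory

namespace Tensor2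

variable {B : Type*} [Bicategory B] [Bicategory.Strict B] (T : Tensor2 B)

def cellIso {a b c d : B} {f f' : a ⟶ b} {g g' : c ⟶ d} (e : f ≅ f') (e' : g ≅ g') :
    T.hom f g ≅ T.hom f' g' where
  hom := T.cell e.hom e'.hom
  inv := T.cell e.inv e'.inv
  hom_inv_id := by rw [← T.cell_comp, e.hom_inv_id, e'.hom_inv_id, T.cell_id]
  inv_hom_id := by rw [← T.cell_comp, e.inv_hom_id, e'.inv_hom_id, T.cell_id]

def homCompHomIsoId {a b a' b' : B} {f : a ⟶ b} {g : b ⟶ a} {f' : a' ⟶ b'} {g' : b' ⟶ a'}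
    (e : g ≫ f ≅ 𝟙 b) (e' : g' ≫ f' ≅ 𝟙 b') : T.hom g g' ≫ T.hom f f' ≅ 𝟙 (T.obj b b') :=
  eqToIso (T.hom_comp g f g' f').symm ≪≫ T.cellIso e e' ≪≫ eqToIso (T.hom_id b b')

theorem hom_id_comp (a : B) {x y z : B} (u : x ⟶ y) (v : y ⟶ z) :
    T.hom (𝟙 a) (u ≫ v) = T.hom (𝟙 a) u ≫ T.hom (𝟙 a) v := by
  simpa using T.hom_comp (𝟙 a) (𝟙 a) u v

theorem hom_comp_id {x y z : B} (u : x ⟶ y) (v : y ⟶ z) (a : B) :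
    T.hom (u ≫ v) (𝟙 a) = T.hom u (𝟙 a) ≫ T.hom v (𝟙 a) := by
  simpa using T.hom_comp u v (𝟙 a) (𝟙 a)

theorem hom_id_eqToHom (a : B) {c d : B} (q : c = d) :
    T.hom (𝟙 a) (eqToHom q) = eqToHom (congrArg (T.obj a) q) := by
  subst q
  exact T.hom_id a c

theorem hom_eqToHom_id {c d : B} (q : c = d) (a : B) :
    T.hom (eqToHom q) (𝟙 a) = eqToHom (congrArg (T.obj · a) q) := by
  subst q
  exact T.hom_id c a

theorem hom_assoc_assoc {a a' b b' c c' : B} (f : a ⟶ a') (g : b ⟶ b') (k : c ⟶ c')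
    {Z : B} (h : T.obj a' (T.obj b' c') ⟶ Z) :
    T.hom (T.hom f g) k ≫ eqToHom (T.assoc a' b' c') ≫ h =
      eqToHom (T.assoc a b c) ≫ T.hom f (T.hom g k) ≫ h := by
  rw [← Category.assoc, T.hom_assoc, Category.assoc]

theorem hom_assoc_symm {a a' b b' c c' : B} (f : a ⟶ a') (g : b ⟶ b') (k : c ⟶ c') :
    T.hom f (T.hom g k) ≫ eqToHom (T.assoc a' b' c').symm =
      eqToHom (T.assoc a b c).symm ≫ T.hom (T.hom f g) k := by
  rw [comp_eqToHom_iff, Category.assoc, T.hom_assoc, ← Category.assoc, eqToHom_trans,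
    eqToHom_refl, Category.id_comp]

theorem hom_assoc_symm_assoc {a a' b b' c c' : B} (f : a ⟶ a') (g : b ⟶ b') (k : c ⟶ c')
    {Z : B} (h : T.obj (T.obj a' b') c' ⟶ Z) :
    T.hom f (T.hom g k) ≫ eqToHom (T.assoc a' b' c').symm ≫ h =
      eqToHom (T.assoc a b c).symm ≫ T.hom (T.hom f g) k ≫ h := by
  rw [← Category.assoc, hom_assoc_symm, Category.assoc]

end Tensor2

namespace DefinesAssociator

variable {B : Type*} [Bicategory B] [Bicategory.Strict B] {T : Tensor2 B} {I : B}
  {α : T.obj I I ⟶ I} {lamI : T.obj I I ⟶ I} {L : T.hom (𝟙 I) lamI ⟶ aIR T I α} [hL : IsIso L]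
  {rhoI : T.obj I I ⟶ I} {R : Ia T I α ⟶ eqToHom (T.assoc I I I).symm ≫ T.hom rhoI (𝟙 I)}
  [hR : IsIso R] {A : Ia T I α ⟶ aIR T I α}

theorem isIso_whiskerLeft (hA : DefinesAssociator T I α lamI L hL rhoI R hR A) :
    IsIso (IaI T I α ◁ A) := by
  have w : T.obj I (T.obj (T.obj I I) I) = T.obj I (T.obj I (T.obj I I)) := by
    rw [T.assoc]
  have m₁ : IaI T I α = eqToHom w ≫ T.hom (𝟙 I) (aIR T I α) := by
    rw [IaI, aIR, T.hom_id_comp, T.hom_id_eqToHom]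
    simp
  have w2 : T.obj I (T.obj (T.obj I I) I) = T.obj (T.obj I I) (T.obj I I) := by
    rw [T.assoc I I I, ← T.assoc I I (T.obj I I)]
  have sq : (eqToHom w ≫ T.hom (𝟙 I) (T.hom (𝟙 I) lamI)) ≫
        (eqToHom (T.assoc I I I).symm ≫ T.hom rhoI (𝟙 I)) =
      (eqToHom w2 ≫ T.hom rhoI (𝟙 (T.obj I I))) ≫ T.hom (𝟙 I) lamI := by
    simp only [Category.assoc, T.hom_assoc_symm_assoc, ← T.hom_comp, T.hom_id,
      eqToHom_trans_assoc, Category.id_comp, Category.comp_id]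
  have w3 : T.obj I (T.obj (T.obj I I) I) = T.obj (T.obj I (T.obj I I)) I :=
    (T.assoc I (T.obj I I) I).symm
  have m₃ : (eqToHom w2 ≫ T.hom rhoI (𝟙 (T.obj I I))) ≫ T.hom (𝟙 I) lamI =
      (eqToHom w3 ≫ T.hom (eqToHom (T.assoc I I I).symm ≫ T.hom rhoI (𝟙 I)) (𝟙 I)) ≫
        (eqToHom (T.assoc I I I) ≫ T.hom (𝟙 I) lamI) := by
    rw [T.hom_comp_id, T.hom_eqToHom_id]
    simp only [Category.assoc, T.hom_assoc_assoc, ← T.hom_comp, T.hom_id,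
      eqToHom_trans_assoc, Category.id_comp, Category.comp_id]
  have m₄ : (eqToHom w3 ≫ T.hom (T.hom (𝟙 I) α) (𝟙 I)) ≫
        (eqToHom (T.assoc I I I) ≫ T.hom (𝟙 I) lamI) = IaI T I α ≫ T.hom (𝟙 I) lamI := by
    simp only [Category.assoc, T.hom_assoc_assoc, eqToHom_trans_assoc, eqToHom_refl,
      Category.id_comp, IaI]
  have : IsIso (T.cell (𝟙 (𝟙 I)) (inv L)) := (lFun T I _ _).map_isIso (inv L)
  have : IsIso (T.cell (inv R) (𝟙 (𝟙 I))) := (rFun T I _ _).map_isIso (inv R)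
  rw [← hA w m₁ w2 sq w3 m₃ m₄]
  repeat' apply IsIso.comp_isIso'
  -- instance search misses `eqToHom m₄`: its source is displayed through `Ia`
  all_goals first | infer_instance | exact (eqToIso m₄).isIso_hom

theorem isIso (hA : DefinesAssociator T I α lamI L hL rhoI R hR A) {β : I ⟶ T.obj I I}
    (e : β ≫ α ≅ 𝟙 I) : IsIso A :=
  have := hA.isIso_whiskerLeft
  isIso_of_isIso_whiskerLeft (f := IaI T I α)
    (T.homCompHomIsoId (λ_ (𝟙 I)) (T.homCompHomIsoId e (λ_ (𝟙 I)))) A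

end DefinesAssociator

theorem unit2_compare_constraints_with_alpha_general
    {B : Type*} [Bicategory B] [Bicategory.Strict B] (T : Tensor2 B)
    {I : B} {α : T.obj I I ⟶ I} (h : IsUnit2 T I α)
    (lamI : T.obj I I ⟶ I)
    (L : T.hom (𝟙 I) lamI ⟶ aIR T I α) (hL : IsIso L)
    (rhoI : T.obj I I ⟶ I)
    (R : Ia T I α ⟶ eqToHom (T.assoc I I I).symm ≫ T.hom rhoI (𝟙 I))
    (hR : IsIso R)
    (A : Ia T I α ⟶ aIR T I α)
    (hA : DefinesAssociator T I α lamI L hL rhoI R hR A) :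
    ((∃! D : α ⟶ lamI, T.cell (𝟙 (𝟙 I)) D ≫ L = A) ∧
      (∀ D : α ⟶ lamI, T.cell (𝟙 (𝟙 I)) D ≫ L = A → IsIso D)) ∧
    ((∃! E : rhoI ⟶ α,
        R ≫ (eqToHom (T.assoc I I I).symm ◁ T.cell E (𝟙 (𝟙 I))) = A) ∧
      (∀ E : rhoI ⟶ α,
        R ≫ (eqToHom (T.assoc I I I).symm ◁ T.cell E (𝟙 (𝟙 I))) = A → IsIso E)) := by
  obtain ⟨⟨hl, hr⟩, β, -, ⟨e⟩⟩ := h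
  have := hL
  have := hR
  have := hA.isIso e
  have := hl (T.obj I I) I
  have := hr (T.obj I I) I
  -- `(asIso L :)` is elaborated at the type of `L`, where the instance `IsIso L` is visible
  exact ⟨⟨(lFun T I _ _).existsUnique_map_comp_eq (asIso L :) A,
      fun _ hD => (lFun T I _ _).isIso_of_map_comp_eq (asIso L :) (asIso A :) hD⟩,
    ⟨(rFun T I _ _ ⋙ precomp _ _).existsUnique_comp_map_eq (asIso R :) A,
      fun _ hE => (rFun T I _ _ ⋙ precomp _ _).isIso_of_comp_map_eq (asIso R :) (asIso A :) hE⟩⟩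

/-- Given a unit object `(I, α)` in a strict semi-monoidal 2-category, with chosen left
constraint `(λ_I, L)` and right constraint `(ρ_I, R)` at `I`, there are unique 2-cells
`D : α ⟹ λ_I` and `E : ρ_I ⟹ α` characterized by `(I ⊗ D) ∘ L = A` and `(E ⊗ I) ∘ R = A`,
where `A : I⊗α ⟹ α⊗I` is the canonical associator 2-cell of `α` (defined by the pasting
equation (9)); moreover any such `D` and `E` are invertible. -/
theorem unit2_compare_constraints_with_alpha
    {B : Type*} [Bicategory B] [Bicategory.Strict B] (T : Tensor2 B)
    {I : B} {α : T.obj I I ⟶ I} (h : IsUnit2 T I α)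
    (lamI : T.obj I I ⟶ I)
    (L : T.hom (𝟙 I) lamI ⟶ aIR T I α) (hlam : IsEquiArrow lamI) (hL : IsIso L)
    (rhoI : T.obj I I ⟶ I)
    (R : Ia T I α ⟶ eqToHom (T.assoc I I I).symm ≫ T.hom rhoI (𝟙 I))
    (hrho : IsEquiArrow rhoI) (hR : IsIso R)
    (A : Ia T I α ⟶ aIR T I α)
    (hA : DefinesAssociator T I α lamI L hL rhoI R hR A) :
    ((∃! D : α ⟶ lamI, T.cell (𝟙 (𝟙 I)) D ≫ L = A) ∧
      (∀ D : α ⟶ lamI, T.cell (𝟙 (𝟙 I)) D ≫ L = A → IsIso D)) ∧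
    ((∃! E : rhoI ⟶ α,
        R ≫ (eqToHom (T.assoc I I I).symm ◁ T.cell E (𝟙 (𝟙 I))) = A) ∧
      (∀ E : rhoI ⟶ α,
        R ≫ (eqToHom (T.assoc I I I).symm ◁ T.cell E (𝟙 (𝟙 I))) = A → IsIso E)) :=
  unit2_compare_constraints_with_alpha_general T h lamI L hL rhoI R hR A hA
end

section
/- In the arrow 2-category C^2 of a strict semi-monoidal 2-category C, a 1-cell (f₀, f₁, F) : x → y (a square with F : f₀∘y ⟹ x∘f₁) is an equi-arrow whenever f₀ and f₁ are equi-arrows in C and the 2-cell F is invertible. -/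
/-! Upgrade `f₀` and `f₁` to adjoint equivalences `e₀`, `e₁`. The pseudo-inverse square is the
mate of `F⁻¹` with respect to `e₀.hom ⊣ e₀.inv` and `e₁.hom ⊣ e₁.inv`; it is invertible because
units and counits are. Pasting `F` with the mate of `F⁻¹` gives back the units on one side and the
counits on the other, by the two transposed forms of the mate correspondence; these are the two
cylinders (after cancelling the invertible unit of `e₀`). -/

open CategoryTheory Bicategory

universe w v u

variable {B : Type u} [Bicategory.{w, v} B] [Bicategory.Strict B]

/-- Horizontal composite of two squares (1-cells of the arrow 2-category `C²`). -/
def compSq {X₀ X₁ Y₀ Y₁ Z₀ Z₁ : B} {x : X₀ ⟶ X₁} {y : Y₀ ⟶ Y₁} {z : Z₀ ⟶ Z₁}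
    {f₀ : X₀ ⟶ Y₀} {f₁ : X₁ ⟶ Y₁} {g₀ : Y₀ ⟶ Z₀} {g₁ : Y₁ ⟶ Z₁}
    (F : f₀ ≫ y ⟶ x ≫ f₁) (G : g₀ ≫ z ⟶ y ≫ g₁) :
    (f₀ ≫ g₀) ≫ z ⟶ x ≫ (f₁ ≫ g₁) :=
  eqToHom (Category.assoc f₀ g₀ z) ≫ (f₀ ◁ G) ≫ eqToHom (Category.assoc f₀ y g₁).symm ≫
    (F ▷ g₁) ≫ eqToHom (Category.assoc x f₁ g₁)

/-- The identity square on an arrow `x` (the identity 1-cell of `C²` at the object `x`). -/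
def idSq {X₀ X₁ : B} (x : X₀ ⟶ X₁) : 𝟙 X₀ ≫ x ⟶ x ≫ 𝟙 X₁ :=
  eqToHom (by rw [Category.id_comp, Category.comp_id])

namespace CategoryTheory.Bicategory

variable {C : Type*} [Bicategory C]

@[simps]
def Equivalence.adjunction {a b : C} (e : a ≌ b) : e.hom ⊣ e.inv where
  unit := e.unit.hom
  counit := e.counit.hom
  left_triangle := e.left_triangle_hom
  right_triangle := e.right_triangle_hom

theorem Equivalence.exists_hom_eq {a b : C} {f : a ⟶ b}
    (hf : ∃ g : b ⟶ a, Nonempty (f ≫ g ≅ 𝟙 a) ∧ Nonempty (g ≫ f ≅ 𝟙 b)) :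
    ∃ e : a ≌ b, e.hom = f :=
  let ⟨_, ⟨unitIso⟩, ⟨counitIso⟩⟩ := hf
  ⟨.mkOfAdjointifyCounit unitIso.symm counitIso, rfl⟩

variable {c d e f : C} {g : c ⟶ e} {h : d ⟶ f} {l₁ : c ⟶ d} {r₁ : d ⟶ c} {l₂ : e ⟶ f}
  {r₂ : f ⟶ e}

theorem Adjunction.unit_mateEquiv (adj₁ : l₁ ⊣ r₁) (adj₂ : l₂ ⊣ r₂) (α : g ≫ l₂ ⟶ l₁ ≫ h) :
    (λ_ g).inv ≫ adj₁.unit ▷ g ≫ (α_ _ _ _).hom ≫ l₁ ◁ mateEquiv adj₁ adj₂ α =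
      (ρ_ g).inv ≫ g ◁ adj₂.unit ≫ (α_ _ _ _).inv ≫ α ▷ r₂ ≫ (α_ _ _ _).hom := by
  simpa [Adjunction.homEquiv₁_symm_apply, Adjunction.homEquiv₂_apply] using
    (mateEquiv_eq_iff adj₁ adj₂ α _).1 rfl

theorem Adjunction.mateEquiv_counit (adj₁ : l₁ ⊣ r₁) (adj₂ : l₂ ⊣ r₂) (α : g ≫ l₂ ⟶ l₁ ≫ h) :
    mateEquiv adj₁ adj₂ α ▷ l₂ ⊗≫ h ◁ adj₂.counit =
      𝟙 _ ⊗≫ r₁ ◁ α ⊗≫ adj₁.counit ▷ h ⊗≫ 𝟙 _ := by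
  calc
    _ = 𝟙 _ ⊗≫ r₁ ◁ g ◁ adj₂.unit ▷ l₂ ⊗≫ r₁ ◁ α ▷ r₂ ▷ l₂ ⊗≫
          (adj₁.counit ▷ (h ≫ r₂ ≫ l₂) ≫ 𝟙 d ◁ h ◁ adj₂.counit) ⊗≫ 𝟙 _ := by
      rw [mateEquiv_apply']; bicategory
    _ = 𝟙 _ ⊗≫ r₁ ◁ g ◁ adj₂.unit ▷ l₂ ⊗≫
          r₁ ◁ (α ▷ (r₂ ≫ l₂) ≫ (l₁ ≫ h) ◁ adj₂.counit) ⊗≫ adj₁.counit ▷ h ⊗≫ 𝟙 _ := by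
      rw [← whisker_exchange]; bicategory
    _ = 𝟙 _ ⊗≫ r₁ ◁ g ◁ leftZigzag adj₂.unit adj₂.counit ⊗≫ r₁ ◁ α ⊗≫
          adj₁.counit ▷ h ⊗≫ 𝟙 _ := by
      rw [← whisker_exchange, leftZigzag]; bicategory
    _ = _ := by rw [adj₂.left_triangle]; bicategory

theorem Adjunction.unit_mateEquiv_inv (adj₁ : l₁ ⊣ r₁) (adj₂ : l₂ ⊣ r₂)
    (F : l₁ ≫ h ⟶ g ≫ l₂) [IsIso F] :
    (λ_ g).inv ≫ adj₁.unit ▷ g ≫ (α_ _ _ _).hom ≫ l₁ ◁ mateEquiv adj₁ adj₂ (inv F) ≫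
      (α_ _ _ _).inv ≫ F ▷ r₂ ≫ (α_ _ _ _).hom = (ρ_ g).inv ≫ g ◁ adj₂.unit := by
  rw [reassoc_of% adj₁.unit_mateEquiv adj₂ (inv F)]
  simp

theorem Adjunction.mateEquiv_inv_counit (adj₁ : l₁ ⊣ r₁) (adj₂ : l₂ ⊣ r₂)
    (F : l₁ ≫ h ⟶ g ≫ l₂) [IsIso F] :
    (α_ _ _ _).hom ≫ r₁ ◁ F ≫ (α_ _ _ _).inv ≫ mateEquiv adj₁ adj₂ (inv F) ▷ l₂ ≫
      (α_ _ _ _).hom ≫ h ◁ adj₂.counit = adj₁.counit ▷ h ≫ (λ_ h).hom ≫ (ρ_ h).inv := by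
  calc
    _ = 𝟙 _ ⊗≫ r₁ ◁ F ⊗≫ (mateEquiv adj₁ adj₂ (inv F) ▷ l₂ ⊗≫ h ◁ adj₂.counit) := by
      bicategory
    _ = 𝟙 _ ⊗≫ r₁ ◁ (F ≫ inv F) ⊗≫ adj₁.counit ▷ h ⊗≫ 𝟙 _ := by
      rw [mateEquiv_counit]; bicategory
    _ = _ := by rw [IsIso.hom_inv_id]; bicategory

instance Equivalence.isIso_mateEquiv (e₀ : c ≌ d) (e₁ : e ≌ f) (α : g ≫ e₁.hom ⟶ e₀.hom ≫ h)
    [IsIso α] : IsIso (mateEquiv e₀.adjunction e₁.adjunction α) := by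
  rw [mateEquiv_apply', Equivalence.adjunction_unit, Equivalence.adjunction_counit]
  dsimp only [bicategoricalComp]
  infer_instance

end CategoryTheory.Bicategory

theorem compSq_eq {X₀ X₁ Y₀ Y₁ Z₀ Z₁ : B} {x : X₀ ⟶ X₁} {y : Y₀ ⟶ Y₁} {z : Z₀ ⟶ Z₁}
    {f₀ : X₀ ⟶ Y₀} {f₁ : X₁ ⟶ Y₁} {g₀ : Y₀ ⟶ Z₀} {g₁ : Y₁ ⟶ Z₁}
    (F : f₀ ≫ y ⟶ x ≫ f₁) (G : g₀ ≫ z ⟶ y ≫ g₁) :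
    compSq F G = (α_ f₀ g₀ z).hom ≫ f₀ ◁ G ≫ (α_ f₀ y g₁).inv ≫ F ▷ g₁ ≫ (α_ x f₁ g₁).hom := by
  simp [compSq, Bicategory.Strict.associator_eqToIso]

theorem idSq_eq {X₀ X₁ : B} (x : X₀ ⟶ X₁) : idSq x = (λ_ x).hom ≫ (ρ_ x).inv := by
  simp [idSq, Bicategory.Strict.leftUnitor_eqToIso, Bicategory.Strict.rightUnitor_eqToIso]

section Cylinders

variable {X₀ X₁ Y₀ Y₁ : B} {x : X₀ ⟶ X₁} {y : Y₀ ⟶ Y₁} (e₀ : X₀ ≌ Y₀) (e₁ : X₁ ≌ Y₁)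
  (F : e₀.hom ≫ y ⟶ x ≫ e₁.hom) [IsIso F]

theorem compSq_mateEquiv_inv :
    compSq F (mateEquiv e₀.adjunction e₁.adjunction (inv F)) ≫ x ◁ e₁.unit.inv =
      e₀.unit.inv ▷ x ≫ idSq x := by
  have key := e₀.adjunction.unit_mateEquiv_inv e₁.adjunction F
  simp only [Equivalence.adjunction_unit] at key
  rw [compSq_eq, idSq_eq, ← cancel_epi ((λ_ x).inv ≫ e₀.unit.hom ▷ x)]
  simp only [Category.assoc]
  rw [reassoc_of% key]
  simp

theorem mateEquiv_inv_compSq :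
    compSq (mateEquiv e₀.adjunction e₁.adjunction (inv F)) F ≫ y ◁ e₁.counit.hom =
      e₀.counit.hom ▷ y ≫ idSq y := by
  rw [compSq_eq, idSq_eq]
  simpa only [Category.assoc, Equivalence.adjunction_counit] using
    e₀.adjunction.mateEquiv_inv_counit e₁.adjunction F

end Cylinders

/-- A 1-cell `(f₀, f₁, F)` of the arrow 2-category `C²` of a strict 2-category `C` is an
equi-arrow whenever its components `f₀` and `f₁` are equi-arrows in `C` and the 2-cell `F` is
invertible: it admits a pseudo-inverse square `(g₀, g₁, G)`, with invertible cylinders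
comparing both composites with the identity squares. -/
theorem arrowCat_equiArrow_of_components
    {X₀ X₁ Y₀ Y₁ : B} (x : X₀ ⟶ X₁) (y : Y₀ ⟶ Y₁)
    (f₀ : X₀ ⟶ Y₀) (f₁ : X₁ ⟶ Y₁) (F : f₀ ≫ y ⟶ x ≫ f₁)
    (h₀ : ∃ g : Y₀ ⟶ X₀, Nonempty (f₀ ≫ g ≅ 𝟙 X₀) ∧ Nonempty (g ≫ f₀ ≅ 𝟙 Y₀))
    (h₁ : ∃ g : Y₁ ⟶ X₁, Nonempty (f₁ ≫ g ≅ 𝟙 X₁) ∧ Nonempty (g ≫ f₁ ≅ 𝟙 Y₁))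
    (hF : IsIso F) :
    ∃ (g₀ : Y₀ ⟶ X₀) (g₁ : Y₁ ⟶ X₁) (G : g₀ ≫ x ⟶ y ≫ g₁),
      IsIso G ∧
      (∃ (m₀ : f₀ ≫ g₀ ≅ 𝟙 X₀) (m₁ : f₁ ≫ g₁ ≅ 𝟙 X₁),
        compSq F G ≫ (x ◁ m₁.hom) = (m₀.hom ▷ x) ≫ idSq x) ∧
      (∃ (n₀ : g₀ ≫ f₀ ≅ 𝟙 Y₀) (n₁ : g₁ ≫ f₁ ≅ 𝟙 Y₁),
        compSq G F ≫ (y ◁ n₁.hom) = (n₀.hom ▷ y) ≫ idSq y) := by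
  obtain ⟨e₀, rfl⟩ := Equivalence.exists_hom_eq h₀
  obtain ⟨e₁, rfl⟩ := Equivalence.exists_hom_eq h₁
  exact ⟨e₀.inv, e₁.inv, mateEquiv e₀.adjunction e₁.adjunction (inv F), inferInstance,
    ⟨e₀.unit.symm, e₁.unit.symm, compSq_mateEquiv_inv e₀ e₁ F⟩,
    ⟨e₀.counit, e₁.counit, mateEquiv_inv_compSq e₀ e₁ F⟩⟩
end
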